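/- Let μ and ρ be probability measures on a measurable space X, let g : X → [0,∞) be measurable such that ν := ρ.withDensity g is a probability measure, and suppose g ≤ C holds ρ-almost everywhere for some constant C ≥ 1. Then KL(μ‖ν) ≥ KL(μ‖ρ) − log C (as an inequality in [0,∞]). -/

import Mathlib

open MeasureTheory
open scoped ENNReal NNReal

/-!
Where `μ ≪ ν = g ρ`, the chain rule `dμ/dρ = (dμ/dν) g` gives
`log dμ/dρ = log dμ/dν + log g ≤ log dμ/dν + log C` `μ`-a.e., and integrating yields the bound.
The one subtlety is that `log dμ/dρ` must be `μ`-integrable for `KL(μ‖ρ)` to be finite: its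
positive part is dominated by that same bound, and its negative part is always integrable, since
with `r = dμ/dρ` we have `∫ (log r)⁻ dμ = ∫ r (log r)⁻ dρ ≤ ρ(X)` because `-r log r ≤ 1`.
-/

open Classical in
/-- The Kullback–Leibler divergence `KL(μ‖ν) ∈ [0,∞]`: it is `∫ log(dμ/dν) dμ` if `μ ≪ ν`
and the log-likelihood ratio is `μ`-integrable, and `+∞` otherwise. -/
noncomputable def klDiv {X : Type*} [MeasurableSpace X] (μ ν : Measure X) : ℝ≥0∞ :=
  if μ ≪ ν ∧ Integrable (fun x => Real.log ((μ.rnDeriv ν x).toReal)) μ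
  then ENNReal.ofReal (∫ x, Real.log ((μ.rnDeriv ν x).toReal) ∂μ)
  else ⊤

lemma ENNReal.ofReal_sub_ofReal_le (a c : ℝ) :
    ENNReal.ofReal a - ENNReal.ofReal c ≤ ENNReal.ofReal (a - c) :=
  tsub_le_iff_right.2 (by simpa using ENNReal.ofReal_add_le (p := a - c) (q := c))

lemma Real.mul_max_neg_log_le_one {r : ℝ} (hr : 0 ≤ r) : r * max (-Real.log r) 0 ≤ 1 := by
  rw [mul_max_of_nonneg _ _ hr, mul_zero]
  refine max_le ?_ zero_le_one
  linarith [Real.self_sub_one_le_mul_log hr]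

section

variable {X : Type*} [MeasurableSpace X] {μ ν ρ : Measure X}

lemma klDiv_of_ac_of_integrable (hμν : μ ≪ ν) (h_int : Integrable (llr μ ν) μ) :
    klDiv μ ν = ENNReal.ofReal (∫ x, llr μ ν x ∂μ) := by
  rw [klDiv]
  exact if_pos ⟨hμν, h_int⟩

lemma klDiv_of_not_ac (h : ¬ μ ≪ ν) : klDiv μ ν = ∞ := by
  rw [klDiv]
  exact if_neg (not_and_of_not_left _ h)

lemma klDiv_of_not_integrable (h : ¬ Integrable (llr μ ν) μ) : klDiv μ ν = ∞ := by
  rw [klDiv]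
  exact if_neg (not_and_of_not_right _ h)

lemma integrable_max_neg_llr_zero [SigmaFinite μ] [IsFiniteMeasure ρ] (hμρ : μ ≪ ρ) :
    Integrable (fun x => max (-llr μ ρ x) 0) μ := by
  rw [← integrable_rnDeriv_smul_iff hμρ]
  refine Integrable.of_bound (C := 1) (by fun_prop) (ae_of_all _ fun x => ?_)
  rw [Real.norm_eq_abs, smul_eq_mul, abs_of_nonneg (by positivity)]
  exact Real.mul_max_neg_log_le_one ENNReal.toReal_nonneg

lemma integrable_llr_of_ae_le [SigmaFinite μ] [IsFiniteMeasure ρ] (hμρ : μ ≪ ρ) {h : X → ℝ}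
    (hh : Integrable h μ) (hle : ∀ᵐ x ∂μ, llr μ ρ x ≤ h x) : Integrable (llr μ ρ) μ := by
  refine (hh.abs.add (integrable_max_neg_llr_zero hμρ)).mono'
    (measurable_llr μ ρ).aestronglyMeasurable ?_
  filter_upwards [hle] with x hx
  rw [Real.norm_eq_abs, Pi.add_apply]
  rcases le_total 0 (llr μ ρ x) with hpos | hneg
  · rw [abs_of_nonneg hpos]
    linarith [le_abs_self (h x), le_max_right (-llr μ ρ x) 0]
  · rw [abs_of_nonpos hneg]
    linarith [abs_nonneg (h x), le_max_left (-llr μ ρ x) 0]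

lemma klDiv_sub_ofReal_le_of_llr_le_add [IsProbabilityMeasure μ] [IsFiniteMeasure ρ] (c : ℝ)
    (hμν : μ ≪ ν) (hμρ : μ ≪ ρ) (hle : ∀ᵐ x ∂μ, llr μ ρ x ≤ llr μ ν x + c) :
    klDiv μ ρ - ENNReal.ofReal c ≤ klDiv μ ν := by
  by_cases h_int : Integrable (llr μ ν) μ
  swap
  · rw [klDiv_of_not_integrable h_int]
    exact le_top
  have h_int' : Integrable (fun x => llr μ ν x + c) μ := h_int.add (integrable_const c)
  have h_intρ : Integrable (llr μ ρ) μ := integrable_llr_of_ae_le hμρ h_int' hle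
  rw [klDiv_of_ac_of_integrable hμρ h_intρ, klDiv_of_ac_of_integrable hμν h_int]
  calc ENNReal.ofReal (∫ x, llr μ ρ x ∂μ) - ENNReal.ofReal c
      ≤ ENNReal.ofReal (∫ x, llr μ ρ x ∂μ - c) := ENNReal.ofReal_sub_ofReal_le _ _
    _ ≤ ENNReal.ofReal (∫ x, llr μ ν x ∂μ) := by
      refine ENNReal.ofReal_le_ofReal (sub_le_iff_le_add.2 ?_)
      calc ∫ x, llr μ ρ x ∂μ ≤ ∫ x, (llr μ ν x + c) ∂μ := integral_mono_ae h_intρ h_int' hle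
        _ = ∫ x, llr μ ν x ∂μ + c := by simp [integral_add h_int (integrable_const c)]

lemma ae_ne_zero_of_ac_withDensity {f : X → ℝ≥0∞} (hf : Measurable f)
    (hμ : μ ≪ ρ.withDensity f) : ∀ᵐ x ∂μ, f x ≠ 0 :=
  hμ.ae_le ((ae_withDensity_iff hf).2 (ae_of_all _ fun _ => id))

lemma llr_eq_llr_withDensity_add_log [SigmaFinite μ] [SigmaFinite ρ] {g : X → ℝ≥0}
    (hg : Measurable g) (hμ : μ ≪ ρ.withDensity (fun x => (g x : ℝ≥0∞))) :
    ∀ᵐ x ∂μ, llr μ ρ x = llr μ (ρ.withDensity (fun x => (g x : ℝ≥0∞))) x + Real.log (g x) := by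
  set ν := ρ.withDensity (fun x => (g x : ℝ≥0∞))
  have hμρ : μ ≪ ρ := hμ.trans (withDensity_absolutelyContinuous ρ _)
  filter_upwards [hμρ.ae_le (Measure.rnDeriv_mul_rnDeriv hμ (κ := ρ)),
    hμρ.ae_le (Measure.rnDeriv_withDensity ρ hg.coe_nnreal_ennreal),
    Measure.rnDeriv_pos hμ, hμ.ae_le (Measure.rnDeriv_lt_top μ ν),
    ae_ne_zero_of_ac_withDensity hg.coe_nnreal_ennreal hμ] with x hchain hdens hpos hfin hg0
  have hprod : μ.rnDeriv ρ x = μ.rnDeriv ν x * g x := by rw [← hchain, Pi.mul_apply, hdens]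
  have hne : (μ.rnDeriv ν x).toReal ≠ 0 := ENNReal.toReal_ne_zero.2 ⟨hpos.ne', hfin.ne⟩
  simp only [llr_def]
  rw [hprod, ENNReal.toReal_mul, Real.log_mul hne (by simpa using hg0), ENNReal.coe_toReal]

end

theorem KL_withDensity_bounded_ge_general
    {X : Type*} [MeasurableSpace X]
    (μ ρ : Measure X) [IsProbabilityMeasure μ] [IsProbabilityMeasure ρ]
    (g : X → ℝ≥0) (hg : Measurable g)
    (C : ℝ)
    (hbound : ∀ᵐ x ∂ρ, (g x : ℝ) ≤ C) :
    klDiv μ ρ - ENNReal.ofReal (Real.log C)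
      ≤ klDiv μ (ρ.withDensity (fun x => (g x : ℝ≥0∞))) := by
  by_cases hμ : μ ≪ ρ.withDensity (fun x => (g x : ℝ≥0∞))
  swap
  · rw [klDiv_of_not_ac hμ]
    exact le_top
  have hμρ : μ ≪ ρ := hμ.trans (withDensity_absolutelyContinuous ρ _)
  refine klDiv_sub_ofReal_le_of_llr_le_add _ hμ hμρ ?_
  filter_upwards [llr_eq_llr_withDensity_add_log hg hμ,
    ae_ne_zero_of_ac_withDensity hg.coe_nnreal_ennreal hμ, hμρ.ae_le hbound] with x hx hg0 hgC
  rw [hx]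
  have hg_pos : (0 : ℝ) < g x := by simpa [pos_iff_ne_zero] using hg0
  exact add_le_add_right (Real.log_le_log hg_pos hgC) _

theorem KL_withDensity_bounded_ge
    {X : Type*} [MeasurableSpace X]
    (μ ρ : Measure X) [IsProbabilityMeasure μ] [IsProbabilityMeasure ρ]
    (g : X → ℝ≥0) (hg : Measurable g)
    (hν : IsProbabilityMeasure (ρ.withDensity (fun x => (g x : ℝ≥0∞))))
    (C : ℝ) (hC : 1 ≤ C)
    (hbound : ∀ᵐ x ∂ρ, (g x : ℝ) ≤ C) :
    klDiv μ ρ - ENNReal.ofReal (Real.log C)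
      ≤ klDiv μ (ρ.withDensity (fun x => (g x : ℝ≥0∞))) :=
  KL_withDensity_bounded_ge_general μ ρ g hg C hbound
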